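/- Let d ≥ 1. For every repulsion parameter β > 0 there exists ε = ε(β) > 0 such that the soft-core Widom-Rowlinson model on ℤ^d with a priori probability measure α on {-1,0,1} satisfies the Dobrushin condition c(γ) = sup_{i∈ℤ^d} Σ_{j≠i} C_{ij}(γ) < 1 whenever d_{TV}(α, δ_1) < ε or d_{TV}(α, δ_{−1}) < ε, where δ_{±1} denotes the Dirac measure at ±1 and d_{TV} the total variational distance. -/

import Mathlib

open Real Filter Finset Topology

/-- The local state space `{-1, 0, 1}` of the Widom-Rowlinson model. -/
abbrev Spin : Finset ℤ := {-1, 0, 1}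

/-- A probability vector on `{-1, 0, 1}`, encoded as a function `ℤ → ℝ`
supported on `{-1, 0, 1}`. -/
def IsProbVec (ν : ℤ → ℝ) : Prop :=
  (∀ s, 0 ≤ ν s) ∧ (∀ s, s ∉ Spin → ν s = 0) ∧ ∑ s ∈ Spin, ν s = 1

/-- The site space `ℤ^d`. -/
abbrev Site (d : ℕ) := Fin d → ℤ

/-- The number of nearest neighbors `j ∼ i` of site `i` whose spin `ω j` clashes
with the spin value `σ` at `i` (i.e. `σ · ω j = -1`). The neighbors of `i` are
exactly the sites `i ± e_k`, `k = 1, …, d`. -/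
noncomputable def clashCount {d : ℕ} (i : Site d) (σ : ℤ) (ω : Site d → Spin) : ℝ :=
  ∑ k : Fin d, ∑ ε ∈ ({-1, 1} : Finset ℤ),
    (if σ * (ω (Function.update i k (i k + ε)) : ℤ) = -1 then (1 : ℝ) else 0)

/-- The single-site specification kernel of the soft-core Widom-Rowlinson model on
`ℤ^d`: `γ_{{i}}(σ | ω) ∝ α(σ) exp(-β · #{j ∼ i : σ ω_j = -1})`. -/
noncomputable def scKernel (β : ℝ) (α : ℤ → ℝ) {d : ℕ} (i : Site d)
    (ω : Site d → Spin) (σ : ℤ) : ℝ :=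
  α σ * Real.exp (-β * clashCount i σ ω) /
    ∑ σ' ∈ Spin, α σ' * Real.exp (-β * clashCount i σ' ω)

/-- Total variational distance between two probability vectors on `{-1, 0, 1}`. -/
noncomputable def tvDist (p q : ℤ → ℝ) : ℝ := (1 / 2) * ∑ s ∈ Spin, |p s - q s|

/-- The Dobrushin interdependence matrix
`C_{ij}(γ) = sup { ‖γ_{{i}}(·|ω) - γ_{{i}}(·|η)‖_TV : ω = η off j }`. -/
noncomputable def dobMatrix (β : ℝ) (α : ℤ → ℝ) {d : ℕ} (i j : Site d) : ℝ :=
  sSup {r : ℝ | ∃ ω η : Site d → Spin, (∀ k, k ≠ j → ω k = η k) ∧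
    r = tvDist (scKernel β α i ω) (scKernel β α i η)}

/-- The Dobrushin constant `c(γ) = sup_i Σ_{j ≠ i} C_{ij}(γ)`. -/
noncomputable def dobConstant (β : ℝ) (α : ℤ → ℝ) (d : ℕ) : ℝ :=
  ⨆ i : Site d, ∑' j : Site d, if j = i then 0 else dobMatrix β α i j


/-- The Dirac measure at spin value `a`, as a probability vector on `{-1,0,1}`. -/
noncomputable def diracSpin (a : ℤ) : ℤ → ℝ := fun s => if s = a then 1 else 0

/-!
Each single-site kernel has the form `γ(σ) ∝ α(σ) e^{-β n_σ}` with clash counts `0 ≤ n_σ ≤ 2d`,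
so `γ(σ) ≤ e^{2d|β|} α(σ) / α(a)` for any `a` with `α(a) > 0`. If `α` is close to `δ_a`, every
kernel therefore puts almost all its mass on `a`, and any two kernels are within
`e^{2d|β|} (1 - α(a)) / α(a)` in total variation. Only the `2d` nearest neighbors of `i` influence
`γ_{{i}}`, so `c(γ) ≤ 2d e^{2d|β|} (1 - α(a)) / α(a)`, which is `< 1` once `1 - α(a)` is small.
-/

lemma IsProbVec.add_sum_erase {ν : ℤ → ℝ} (hν : IsProbVec ν) {a : ℤ} (ha : a ∈ Spin) :
    ν a + ∑ s ∈ Spin.erase a, ν s = 1 := by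
  rw [Finset.add_sum_erase Spin ν ha, hν.2.2]

lemma IsProbVec.le_one {ν : ℤ → ℝ} (hν : IsProbVec ν) {a : ℤ} (ha : a ∈ Spin) : ν a ≤ 1 := by
  have := Finset.sum_nonneg fun s (_ : s ∈ Spin.erase a) => hν.1 s
  linarith [hν.add_sum_erase ha]

lemma tvDist_diracSpin {ν : ℤ → ℝ} (hν : IsProbVec ν) {a : ℤ} (ha : a ∈ Spin) :
    tvDist ν (diracSpin a) = 1 - ν a := by
  have hoff : ∑ s ∈ Spin.erase a, |ν s - diracSpin a s| = ∑ s ∈ Spin.erase a, ν s :=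
    Finset.sum_congr rfl fun s hs => by
      rw [diracSpin, if_neg (Finset.ne_of_mem_erase hs), sub_zero, abs_of_nonneg (hν.1 s)]
  rw [tvDist, ← Finset.add_sum_erase Spin _ ha, hoff, diracSpin, if_pos rfl,
    abs_of_nonpos (sub_nonpos.mpr (hν.le_one ha))]
  linarith [hν.add_sum_erase ha]

/-- The mass that one vector loses at `a` reappears elsewhere, so the diagonal term of the
total variation is dominated by the off-diagonal ones. -/
lemma tvDist_le_sum_erase {p q : ℤ → ℝ} (hpq : ∑ s ∈ Spin, p s = ∑ s ∈ Spin, q s) {a : ℤ}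
    (ha : a ∈ Spin) : tvDist p q ≤ ∑ s ∈ Spin.erase a, |p s - q s| := by
  have hp := Finset.add_sum_erase Spin p ha
  have hq := Finset.add_sum_erase Spin q ha
  have hdiag : |p a - q a| ≤ ∑ s ∈ Spin.erase a, |p s - q s| :=
    calc |p a - q a| = |∑ s ∈ Spin.erase a, (q s - p s)| := by
          rw [Finset.sum_sub_distrib]; congr 1; linarith
      _ ≤ ∑ s ∈ Spin.erase a, |q s - p s| := Finset.abs_sum_le_sum_abs _ _
      _ = ∑ s ∈ Spin.erase a, |p s - q s| := by simp_rw [abs_sub_comm]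
  rw [tvDist, ← Finset.add_sum_erase Spin _ ha]
  linarith

section Kernel

variable {d : ℕ} (β : ℝ) {α : ℤ → ℝ} (i : Site d) (ω : Site d → Spin)

lemma clashCount_nonneg (σ : ℤ) : 0 ≤ clashCount i σ ω :=
  Finset.sum_nonneg fun _ _ => Finset.sum_nonneg fun _ _ => by split_ifs <;> norm_num

lemma clashCount_le (σ : ℤ) : clashCount i σ ω ≤ 2 * d := by
  calc clashCount i σ ω ≤ ∑ _k : Fin d, ∑ _e ∈ ({-1, 1} : Finset ℤ), (1 : ℝ) :=
        Finset.sum_le_sum fun _ _ => Finset.sum_le_sum fun _ _ => by split_ifs <;> norm_num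
    _ = 2 * d := by simp [mul_comm]

lemma sum_scKernel (hα : ∀ s, 0 ≤ α s) {a : ℤ} (ha : a ∈ Spin) (hpos : 0 < α a) :
    ∑ s ∈ Spin, scKernel β α i ω s = 1 := by
  have hZ : 0 < ∑ σ ∈ Spin, α σ * Real.exp (-β * clashCount i σ ω) :=
    Finset.sum_pos' (fun s _ => mul_nonneg (hα s) (Real.exp_pos _).le)
      ⟨a, ha, mul_pos hpos (Real.exp_pos _)⟩
  unfold scKernel
  rw [← Finset.sum_div, div_self hZ.ne']

lemma scKernel_nonneg (hα : ∀ s, 0 ≤ α s) (s : ℤ) : 0 ≤ scKernel β α i ω s :=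
  div_nonneg (mul_nonneg (hα s) (Real.exp_pos _).le)
    (Finset.sum_nonneg fun σ _ => mul_nonneg (hα σ) (Real.exp_pos _).le)

/-- Comparing with the single term `a` of the partition function; the two clash counts differ
by at most `2d`. -/
lemma scKernel_le (hα : ∀ s, 0 ≤ α s) {a : ℤ} (ha : a ∈ Spin) (hpos : 0 < α a) (s : ℤ) :
    scKernel β α i ω s ≤ α s / α a * Real.exp (2 * d * |β|) := by
  set c := fun σ => clashCount i σ ω
  have hterm : 0 < α a * Real.exp (-β * c a) := mul_pos hpos (Real.exp_pos _)
  have hZ : α a * Real.exp (-β * c a) ≤ ∑ σ ∈ Spin, α σ * Real.exp (-β * c σ) :=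
    Finset.single_le_sum (f := fun σ => α σ * Real.exp (-β * c σ))
      (fun σ _ => mul_nonneg (hα σ) (Real.exp_pos _).le) ha
  have hgap : β * (c a - c s) ≤ 2 * d * |β| :=
    calc β * (c a - c s) ≤ |β| * |c a - c s| := by rw [← abs_mul]; exact le_abs_self _
      _ ≤ |β| * (2 * d) := by
          refine mul_le_mul_of_nonneg_left (abs_sub_le_iff.mpr ⟨?_, ?_⟩) (abs_nonneg β) <;>
            linarith [clashCount_nonneg i ω s, clashCount_nonneg i ω a,
              clashCount_le i ω s, clashCount_le i ω a]
      _ = 2 * d * |β| := by ring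
  calc scKernel β α i ω s ≤ α s * Real.exp (-β * c s) / (α a * Real.exp (-β * c a)) :=
        div_le_div_of_nonneg_left (mul_nonneg (hα s) (Real.exp_pos _).le) hterm hZ
    _ = α s / α a * Real.exp (β * (c a - c s)) := by
        rw [show β * (c a - c s) = -β * c s - -β * c a by ring, Real.exp_sub]
        field_simp
    _ ≤ α s / α a * Real.exp (2 * d * |β|) :=
        mul_le_mul_of_nonneg_left (Real.exp_le_exp.mpr hgap) (div_nonneg (hα s) hpos.le)

end Kernel

lemma tvDist_scKernel_le (β : ℝ) {α : ℤ → ℝ} (hα : IsProbVec α) {a : ℤ} (ha : a ∈ Spin)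
    (hpos : 0 < α a) {d : ℕ} (i : Site d) (ω η : Site d → Spin) :
    tvDist (scKernel β α i ω) (scKernel β α i η) ≤ (1 - α a) / α a * Real.exp (2 * d * |β|) := by
  have hsum : ∑ s ∈ Spin, scKernel β α i ω s = ∑ s ∈ Spin, scKernel β α i η s := by
    rw [sum_scKernel β i ω hα.1 ha hpos, sum_scKernel β i η hα.1 ha hpos]
  calc tvDist (scKernel β α i ω) (scKernel β α i η)
      ≤ ∑ s ∈ Spin.erase a, |scKernel β α i ω s - scKernel β α i η s| :=
        tvDist_le_sum_erase hsum ha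
    _ ≤ ∑ s ∈ Spin.erase a, α s / α a * Real.exp (2 * d * |β|) :=
        Finset.sum_le_sum fun s _ => abs_sub_le_iff.mpr
          ⟨by linarith [scKernel_le β i ω hα.1 ha hpos s, scKernel_nonneg β i η hα.1 s],
            by linarith [scKernel_le β i η hα.1 ha hpos s, scKernel_nonneg β i ω hα.1 s]⟩
    _ = (1 - α a) / α a * Real.exp (2 * d * |β|) := by
        rw [← Finset.sum_mul, ← Finset.sum_div, ← hα.add_sum_erase ha, add_sub_cancel_left]

lemma dobMatrix_le (β : ℝ) {α : ℤ → ℝ} (hα : IsProbVec α) {a : ℤ} (ha : a ∈ Spin)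
    (hpos : 0 < α a) {d : ℕ} (i j : Site d) :
    dobMatrix β α i j ≤ (1 - α a) / α a * Real.exp (2 * d * |β|) := by
  refine Real.sSup_le ?_ ?_
  · rintro r ⟨ω, η, -, rfl⟩
    exact tvDist_scKernel_le β hα ha hpos i ω η
  · exact mul_nonneg (div_nonneg (sub_nonneg.mpr (hα.le_one ha)) hpos.le) (Real.exp_pos _).le

section Neighbors

variable {d : ℕ} (i : Site d)

def neighbors : Finset (Site d) :=
  (Finset.univ ×ˢ ({-1, 1} : Finset ℤ)).image fun p => Function.update i p.1 (i p.1 + p.2)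

lemma card_neighbors_le : (neighbors i).card ≤ 2 * d :=
  Finset.card_image_le.trans_eq (by simp [mul_comm])

lemma clashCount_congr {ω η : Site d → Spin} (h : ∀ j ∈ neighbors i, ω j = η j) (σ : ℤ) :
    clashCount i σ ω = clashCount i σ η := by
  unfold clashCount
  refine Finset.sum_congr rfl fun k _ => Finset.sum_congr rfl fun e he => ?_
  rw [h _ (Finset.mem_image.mpr ⟨(k, e), Finset.mem_product.mpr ⟨Finset.mem_univ k, he⟩, rfl⟩)]

lemma scKernel_congr (β : ℝ) (α : ℤ → ℝ) {ω η : Site d → Spin}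
    (h : ∀ j ∈ neighbors i, ω j = η j) : scKernel β α i ω = scKernel β α i η := by
  funext σ
  simp only [scKernel, clashCount_congr i h]

lemma dobMatrix_eq_zero_of_notMem_neighbors (β : ℝ) (α : ℤ → ℝ) {j : Site d}
    (hj : j ∉ neighbors i) :
    dobMatrix β α i j = 0 := by
  have hset : {r : ℝ | ∃ ω η : Site d → Spin, (∀ k, k ≠ j → ω k = η k) ∧
      r = tvDist (scKernel β α i ω) (scKernel β α i η)} = {0} := by
    refine Set.eq_singleton_iff_unique_mem.mpr ⟨?_, ?_⟩
    · let ω : Site d → Spin := fun _ => ⟨1, by decide⟩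
      exact ⟨ω, ω, fun _ _ => rfl, by simp [tvDist]⟩
    · rintro r ⟨ω, η, hωη, rfl⟩
      rw [scKernel_congr i β α fun k hk => hωη k (ne_of_mem_of_not_mem hk hj)]
      simp [tvDist]
  rw [dobMatrix, hset, csSup_singleton]

lemma tsum_dobMatrix_le (β : ℝ) (α : ℤ → ℝ) {B : ℝ} (hB : 0 ≤ B)
    (hle : ∀ j, dobMatrix β α i j ≤ B) :
    ∑' j : Site d, (if j = i then 0 else dobMatrix β α i j) ≤ 2 * d * B := by
  rw [tsum_eq_sum (s := neighbors i) fun j hj => by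
    rw [dobMatrix_eq_zero_of_notMem_neighbors i β α hj, ite_self]]
  calc ∑ j ∈ neighbors i, (if j = i then 0 else dobMatrix β α i j)
      ≤ ∑ _j ∈ neighbors i, B := Finset.sum_le_sum fun j _ => by split_ifs <;> simp [hB, hle]
    _ = (neighbors i).card * B := by rw [Finset.sum_const, nsmul_eq_mul]
    _ ≤ 2 * d * B := mul_le_mul_of_nonneg_right (by exact_mod_cast card_neighbors_le i) hB

end Neighbors

lemma dobConstant_le (β : ℝ) {α : ℤ → ℝ} (hα : IsProbVec α) {a : ℤ} (ha : a ∈ Spin)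
    (hpos : 0 < α a) (d : ℕ) :
    dobConstant β α d ≤ 2 * d * ((1 - α a) / α a * Real.exp (2 * d * |β|)) :=
  ciSup_le fun i => tsum_dobMatrix_le i β α
    (mul_nonneg (div_nonneg (sub_nonneg.mpr (hα.le_one ha)) hpos.le) (Real.exp_pos _).le)
    (dobMatrix_le β hα ha hpos i)

lemma dobConstant_lt_one_of_tvDist_diracSpin_lt (β : ℝ) {α : ℤ → ℝ} (hα : IsProbVec α)
    {a : ℤ} (ha : a ∈ Spin) (d : ℕ)
    (hclose : tvDist α (diracSpin a) < 1 / (2 * d * Real.exp (2 * d * |β|) + 1)) :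
    dobConstant β α d < 1 := by
  set K := 2 * d * Real.exp (2 * d * |β|)
  have hK : 0 ≤ K := by positivity
  rw [tvDist_diracSpin hα ha, lt_div_iff₀ (by positivity)] at hclose
  have hpos : 0 < α a := by nlinarith [hα.le_one ha]
  calc dobConstant β α d ≤ 2 * d * ((1 - α a) / α a * Real.exp (2 * d * |β|)) :=
        dobConstant_le β hα ha hpos d
    _ = K * (1 - α a) / α a := by ring
    _ < 1 := by rw [div_lt_one hpos]; linarith

theorem dobrushin_near_dirac_general (d : ℕ) (β : ℝ) :
    ∃ ε : ℝ, 0 < ε ∧ ∀ α : ℤ → ℝ, IsProbVec α →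
      (tvDist α (diracSpin 1) < ε ∨ tvDist α (diracSpin (-1)) < ε) →
      dobConstant β α d < 1 := by
  refine ⟨1 / (2 * d * Real.exp (2 * d * |β|) + 1), by positivity, fun α hα hclose => ?_⟩
  rcases hclose with h | h
  · exact dobConstant_lt_one_of_tvDist_diracSpin_lt β hα (by decide) d h
  · exact dobConstant_lt_one_of_tvDist_diracSpin_lt β hα (by decide) d h

/-- For every `β > 0` there is `ε > 0` such that the soft-core Widom-Rowlinson model
on `ℤ^d` satisfies the Dobrushin condition whenever the a priori measure `α` is
`ε`-close in total variational distance to `δ_1` or to `δ_{-1}`. -/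
theorem dobrushin_near_dirac (d : ℕ) (hd : 1 ≤ d) (β : ℝ) (hβ : 0 < β) :
    ∃ ε : ℝ, 0 < ε ∧ ∀ α : ℤ → ℝ, IsProbVec α →
      (tvDist α (diracSpin 1) < ε ∨ tvDist α (diracSpin (-1)) < ε) →
      dobConstant β α d < 1 :=
  dobrushin_near_dirac_general d β
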